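/- Let k be an algebraically closed field of characteristic zero, n > 1, p a positive integer, and let P'(z) = w_0 z^m + w_1 z^{m-1} + ... + w_{m-1} z + w_m with m > 1, where each w_i ∈ K has Newton diagram 𝓔(w_i) ⊆ ℝ_{≥0}^n ∩ (1/p)ℤ^n and w_m ≠ 0. Assume that for every i ∈ {0,1,...,m-2,m} every exponent in 𝓔(w_i) has positive first coordinate (i.e. w_i vanishes at x_1 = 0), while w_{m-1} has an exponent with first coordinate zero (i.e. w_{m-1} does not vanish at x_1 = 0). Then P' has exactly one root f ∈ K all of whose exponents have positive first coordinate (positive x_1-order), and there exists a finite composition Φ of order-preserving monomial blowing-ups of ℚ^n such that the image Φ_*(f) of this root under the induced automorphism of K has Newton diagram contained in ℝ_{≥0}^n ∩ (1/p)ℤ^n, i.e. Φ_*(f) ∈ k[[x_1^{1/p},...,x_n^{1/p}]]. -/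

import Mathlib

noncomputable section

instance (n : ℕ) : WellFoundedLT (Fin n) := inferInstance

noncomputable instance (n : ℕ) : IsOrderedAddMonoid (Lex (Fin n → ℚ)) :=
  inferInstance

/-- `K`: the field of Hahn series over `k` with value group `ℚ^n` ordered
lexicographically (formal sums `Σ f_v x^v`, `v ∈ ℚ^n`, with well-ordered support). -/
abbrev K (k : Type*) [Field k] (n : ℕ) : Type _ :=
  HahnSeries (Lex (Fin n → ℚ)) k

/-- The order-preserving monomial blowing-up `φ_{ij}` of `ℚ^n` (intended for `i < j`):
the `j`-th coordinate becomes `a i + a j`, the other coordinates are unchanged. -/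
def blowUp (n : ℕ) (i j : Fin n) : (Fin n → ℚ) → (Fin n → ℚ) :=
  fun a l => if l = j then a i + a j else a l

/-- The order-preserving monomial blowing-down `φ_{ij}⁻¹` of `ℚ^n` (intended for `i < j`). -/
def blowDown (n : ℕ) (i j : Fin n) : (Fin n → ℚ) → (Fin n → ℚ) :=
  fun a l => if l = j then a l - a i else a l

/-- `Φ` is a finite composition of order-preserving monomial blowing-ups `φ_{ij}`, `i < j`. -/
def IsBlowUpComp (n : ℕ) (Φ : (Fin n → ℚ) → (Fin n → ℚ)) : Prop :=
  ∃ L : List ((Fin n → ℚ) → (Fin n → ℚ)),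
    (∀ g ∈ L, ∃ i j : Fin n, i < j ∧ g = blowUp n i j) ∧ Φ = L.foldr (· ∘ ·) id

/-- `Φ ∈ 𝒮`: `Φ` is a finite composition of order-preserving monomial
blowing-downs `φ_{ij}⁻¹`, `i < j`. -/
def IsBlowDownComp (n : ℕ) (Φ : (Fin n → ℚ) → (Fin n → ℚ)) : Prop :=
  ∃ L : List ((Fin n → ℚ) → (Fin n → ℚ)),
    (∀ g ∈ L, ∃ i j : Fin n, i < j ∧ g = blowDown n i j) ∧ Φ = L.foldr (· ∘ ·) id

/-!
Let `o` be the order of the coefficient `w_{m-1}` of `z`. Every exponent `v` of every coefficient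
satisfies `o ≤ v` lexicographically and the first nonzero coordinate of `v - o` is at least `1/p`,
so for `N` large the composition `Φ = φ_{n-2,n-1}^N ∘ ⋯ ∘ φ_{0,1}^N` maps every `v - o` into
`(1/p)ℕ^n`. After dividing `P'` by the leading monomial of `w_{m-1}`, all coefficients, and the
inverse `u` of the new coefficient of `z`, are therefore supported in the monoid
`S = Φ⁻¹((1/p)ℕ^n)`. The simplified Newton iteration `F ↦ F - u P'(F)` from `0` stays in `S`, and
since all coefficients other than that of `z` vanish at `x₁ = 0`, each step raises the
`x₁`-order of `P'(F)` by `1/p`; the corrections form a summable family whose sum is the root.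
For uniqueness, `P'(g) - P'(f) = (g - f)(w_{m-1} + r)` where `r` has positive `x₁`-order, while
`w_{m-1}` has a term of `x₁`-order `0`.
-/

open Polynomial
open scoped Pointwise

theorem Set.IsWF.of_forall_inter_Iic {α : Type*} [Preorder α] {s : Set α}
    (h : ∀ x ∈ s, (s ∩ Set.Iic x).IsWF) : s.IsWF := by
  rw [Set.isWF_iff_no_descending_seq]
  intro f hf hmem
  exact Set.isWF_iff_no_descending_seq.1 (h _ (hmem 0)) f hf
    fun k => ⟨hmem k, hf.antitone (Nat.zero_le k)⟩

theorem List.foldr_comp_eq_comp {α : Type*} (L : List (α → α)) (c : α → α) :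
    L.foldr (· ∘ ·) c = L.foldr (· ∘ ·) id ∘ c := by
  induction L with
  | nil => rfl
  | cons g L ih => simp only [List.foldr_cons, ih, Function.comp_assoc]

namespace Polynomial

variable {L : Type*} [CommRing L]

theorem eval_mem_of_coeff_mem (A : Subring L) {P : L[X]} (hP : ∀ t, P.coeff t ∈ A) {x : L}
    (hx : x ∈ A) : P.eval x ∈ A := by
  rw [eval_eq_sum_range]
  exact sum_mem fun t _ => mul_mem (hP t) (pow_mem hx t)

theorem exists_eval_sub_eval_eq_mul (A : Subring L) (J : AddSubgroup L)
    (hJ : ∀ b ∈ J, ∀ a ∈ A, b * a ∈ J) {P : L[X]} (hP : ∀ t ≠ 1, P.coeff t ∈ J) {x y : L}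
    (hx : x ∈ A) (hy : y ∈ A) : ∃ r ∈ J, P.eval y - P.eval x = (y - x) * (P.coeff 1 + r) := by
  set D : ℕ → L := fun t => ∑ i ∈ Finset.range t, y ^ i * x ^ (t - 1 - i)
  have hD (t : ℕ) : D t ∈ A := sum_mem fun i _ => mul_mem (pow_mem hy i) (pow_mem hx _)
  set s := Finset.range (P.natDegree + 2)
  have h1 : 1 ∈ s := Finset.mem_range.2 (by omega)
  refine ⟨∑ t ∈ s.erase 1, P.coeff t * D t,
    sum_mem fun t ht => hJ _ (hP t (Finset.ne_of_mem_erase ht)) _ (hD t), ?_⟩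
  have hdiff (t : ℕ) : P.coeff t * y ^ t - P.coeff t * x ^ t = (y - x) * (P.coeff t * D t) := by
    rw [← mul_sub, ← geom_sum₂_mul]
    ring
  rw [eval_eq_sum_range' (n := P.natDegree + 2) (by omega),
    eval_eq_sum_range' (n := P.natDegree + 2) (by omega), ← Finset.sum_sub_distrib,
    Finset.sum_congr rfl fun t _ => hdiff t, ← Finset.mul_sum, ← Finset.add_sum_erase s _ h1]
  simp [D]

theorem eq_of_eval_eq_zero (A : Subring L) (J : AddSubgroup L)
    (hJ : ∀ b ∈ J, ∀ a ∈ A, b * a ∈ J) {P : L[X]} (hP : ∀ t ≠ 1, P.coeff t ∈ J)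
    (hP1 : P.coeff 1 ∉ J) [NoZeroDivisors L] {x y : L} (hx : x ∈ A) (hy : y ∈ A)
    (hPx : P.eval x = 0) (hPy : P.eval y = 0) : x = y := by
  obtain ⟨r, hr, h⟩ := exists_eval_sub_eval_eq_mul A J hJ hP hx hy
  rw [hPx, hPy, sub_zero, eq_comm, mul_eq_zero, sub_eq_zero] at h
  refine (h.resolve_right fun h1 => hP1 ?_).symm
  rw [eq_neg_of_add_eq_zero_left h1]
  exact neg_mem hr

/-- Newton's iteration for a root of `P` near `0` with the derivative frozen: `u` plays the role
of `P'(0)⁻¹`. -/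
def simplifiedNewtonSeq (P : L[X]) (u : L) : ℕ → L
  | 0 => 0
  | j + 1 => simplifiedNewtonSeq P u j - u * P.eval (simplifiedNewtonSeq P u j)

end Polynomial

namespace HahnSeries

section SupportedIn

variable {Γ R : Type*} [PartialOrder Γ]

variable (R) in
def supportedIn [AddGroup R] (T : Set Γ) : AddSubgroup (HahnSeries Γ R) where
  carrier := {x | x.support ⊆ T}
  add_mem' {x y} hx hy := (support_add_subset x y).trans (Set.union_subset hx hy)
  zero_mem' := by simp
  neg_mem' hx := by simpa [support_neg] using hx

variable {T U : Set Γ}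

theorem supportedIn_mono [AddGroup R] (h : T ⊆ U) : supportedIn R T ≤ supportedIn R U :=
  fun _ hx => hx.trans h

theorem single_mem_supportedIn [AddGroup R] {a : Γ} (ha : a ∈ T) (r : R) :
    single a r ∈ supportedIn R T :=
  support_single_subset.trans (Set.singleton_subset_iff.2 ha)

theorem hsum_mem_supportedIn [AddCommGroup R] {α : Type*} {s : SummableFamily Γ R α}
    (h : ∀ i, s i ∈ supportedIn R T) : s.hsum ∈ supportedIn R T :=
  SummableFamily.support_hsum_subset.trans (Set.iUnion_subset h)

variable [AddCommMonoid Γ] [IsOrderedCancelAddMonoid Γ]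

theorem mul_mem_supportedIn [NonUnitalNonAssocRing R] {x y : HahnSeries Γ R}
    (hx : x ∈ supportedIn R T) (hy : y ∈ supportedIn R U) : x * y ∈ supportedIn R (T + U) :=
  support_mul_subset.trans (Set.add_subset_add hx hy)

variable (R) in
def supportedInSubring [Ring R] (S : AddSubmonoid Γ) : Subring (HahnSeries Γ R) where
  toAddSubgroup := supportedIn R S
  one_mem' := by simpa using single_mem_supportedIn (R := R) S.zero_mem 1
  mul_mem' hx hy := supportedIn_mono (AddSubmonoid.add_subset le_rfl le_rfl)
    (mul_mem_supportedIn hx hy)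

end SupportedIn

theorem inv_mem_supportedInSubring {Γ R : Type*} [AddCommGroup Γ] [LinearOrder Γ]
    [IsOrderedAddMonoid Γ] [Field R] {S : AddSubmonoid Γ} {x : HahnSeries Γ R}
    (hx : x ∈ supportedInSubring R S) (h0 : x.order = 0) : x⁻¹ ∈ supportedInSubring R S := by
  have hc : single 0 x.leadingCoeff⁻¹ ∈ supportedInSubring R S :=
    single_mem_supportedIn S.zero_mem _
  have hpow (i : ℕ) : SummableFamily.powers (1 - single 0 x.leadingCoeff⁻¹ * x) i ∈
      supportedInSubring R S := by
    refine pow_mem ?_ i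
    split_ifs
    exacts [sub_mem (one_mem _) (mul_mem hc hx), zero_mem _]
  rw [inv_def, h0, neg_zero]
  exact mul_mem hc (hsum_mem_supportedIn hpow)

section Filtration

variable {Γ R : Type*} [AddCommMonoid Γ] [LinearOrder Γ] (ν : Γ →+ ℚ)

variable (R) in
abbrev filtration [AddGroup R] (a : ℚ) : AddSubgroup (HahnSeries Γ R) :=
  supportedIn R {v | a ≤ ν v}

variable {ν}

theorem filtration_anti [AddGroup R] {a b : ℚ} (h : a ≤ b) :
    filtration R ν b ≤ filtration R ν a :=
  supportedIn_mono fun _ hv => h.trans hv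

theorem mul_mem_filtration [IsOrderedCancelAddMonoid Γ] [NonUnitalNonAssocRing R] {a b : ℚ}
    {x y : HahnSeries Γ R} (hx : x ∈ filtration R ν a) (hy : y ∈ filtration R ν b) :
    x * y ∈ filtration R ν (a + b) := by
  refine supportedIn_mono ?_ (mul_mem_supportedIn hx hy)
  rintro _ ⟨v, hv, w, hw, rfl⟩
  show a + b ≤ ν (v + w)
  rw [map_add]
  exact add_le_add hv hw

theorem eq_zero_of_forall_mem_filtration [AddGroup R] {δ : ℚ} (hδ : 0 < δ) {x : HahnSeries Γ R}
    (h : ∀ j : ℕ, x ∈ filtration R ν (j * δ)) : x = 0 := by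
  by_contra hx
  obtain ⟨v, hv⟩ := support_nonempty_iff.2 hx
  obtain ⟨j, hj⟩ := exists_nat_gt (ν v / δ)
  have hjv : j * δ ≤ ν v := h j hv
  rw [div_lt_iff₀ hδ] at hj
  linarith

variable [AddCommGroup R] (hν : Monotone ν) {δ : ℚ} (hδ : 0 < δ) {d : ℕ → HahnSeries Γ R}
  (hd : ∀ i : ℕ, d i ∈ filtration R ν ((i + 1) * δ))

include hδ hd in
theorem lt_of_mem_support_of_forall_mem_filtration {v : Γ} {i N : ℕ} (hv : v ∈ (d i).support)
    (hN : ν v < N * δ) : i < N := by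
  have hiv : (i + 1) * δ ≤ ν v := hd i hv
  have : (i : ℚ) < N := lt_of_mul_lt_mul_right (by linarith) hδ.le
  exact_mod_cast this

include hν hδ hd in
def summableFamilyOfMemFiltration : SummableFamily Γ R ℕ where
  toFun := d
  isPWO_iUnion_support' := by
    rw [Set.isPWO_iff_isWF]
    refine Set.IsWF.of_forall_inter_Iic fun x _ => ?_
    obtain ⟨N, hN⟩ := exists_nat_gt (ν x / δ)
    rw [div_lt_iff₀ hδ] at hN
    have hsub : (⋃ i, (d i).support) ∩ Set.Iic x ⊆ ⋃ i ∈ Finset.range N, (d i).support := by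
      rintro v ⟨hv, hvx⟩
      obtain ⟨i, hi⟩ := Set.mem_iUnion.1 hv
      exact Set.mem_biUnion (Finset.mem_range.2 (lt_of_mem_support_of_forall_mem_filtration hδ hd
        hi ((hν hvx).trans_lt hN))) hi
    refine Set.IsWF.mono ?_ hsub
    rw [← Finset.sup_set_eq_biUnion, Finset.isWF_sup]
    exact fun i _ => (d i).isWF_support
  finite_co_support' v := by
    obtain ⟨N, hN⟩ := exists_nat_gt (ν v / δ)
    rw [div_lt_iff₀ hδ] at hN
    exact (Set.finite_Iio N).subset fun i hi =>
      lt_of_mem_support_of_forall_mem_filtration hδ hd hi hN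

include hd in
theorem hsum_sub_sum_range_mem_filtration (j : ℕ) :
    (summableFamilyOfMemFiltration hν hδ hd).hsum - ∑ i ∈ Finset.range j, d i ∈
      filtration R ν ((j + 1) * δ) := by
  intro v hv
  by_contra hvj
  refine hv ?_
  rw [coeff_sub, SummableFamily.coeff_hsum_eq_sum_of_subset (t := Finset.range j), coeff_sum]
  · exact sub_self _
  intro i hi
  have hiv : (i + 1) * δ ≤ ν v := hd i hi
  refine Finset.mem_range.2 (lt_of_not_ge fun hji => hvj (le_trans ?_ hiv))
  gcongr

end Filtration

section Newton

variable {Γ R : Type*} [AddCommMonoid Γ] [LinearOrder Γ] [IsOrderedCancelAddMonoid Γ] [CommRing R]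
  {ν : Γ →+ ℚ} {S : AddSubmonoid Γ} (hS : ∀ v ∈ S, 0 ≤ ν v)

include hS

theorem mem_filtration_zero_of_mem_supportedInSubring {x : HahnSeries Γ R}
    (hx : x ∈ supportedInSubring R S) : x ∈ filtration R ν 0 :=
  fun v hv => hS v (hx hv)

theorem mul_mem_filtration_of_mem_supportedInSubring {a : ℚ} {x y : HahnSeries Γ R}
    (hx : x ∈ filtration R ν a) (hy : y ∈ supportedInSubring R S) : x * y ∈ filtration R ν a := by
  simpa using mul_mem_filtration hx (mem_filtration_zero_of_mem_supportedInSubring hS hy)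

variable {δ : ℚ} {P : (HahnSeries Γ R)[X]} (hA : ∀ t, P.coeff t ∈ supportedInSubring R S)
  (hJ : ∀ t ≠ 1, P.coeff t ∈ filtration R ν δ) {u : HahnSeries Γ R}
  (hu : u ∈ supportedInSubring R S) (hu1 : u * P.coeff 1 = 1)

include hA hu in
theorem newton_correction_mem {a : ℚ} {x : HahnSeries Γ R} (hx : x ∈ supportedInSubring R S)
    (hPx : P.eval x ∈ filtration R ν a) :
    u * P.eval x ∈ supportedInSubring R S ∧ u * P.eval x ∈ filtration R ν a :=
  ⟨mul_mem hu (eval_mem_of_coeff_mem _ hA hx),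
    by rw [mul_comm]; exact mul_mem_filtration_of_mem_supportedInSubring hS hPx hu⟩

include hA hJ hu hu1 in
theorem simplifiedNewtonSeq_mem (j : ℕ) :
    simplifiedNewtonSeq P u j ∈ supportedInSubring R S ∧
      P.eval (simplifiedNewtonSeq P u j) ∈ filtration R ν ((j + 1) * δ) := by
  induction j with
  | zero =>
    refine ⟨zero_mem _, ?_⟩
    simpa [simplifiedNewtonSeq, ← coeff_zero_eq_eval_zero] using hJ 0 zero_ne_one
  | succ j ih =>
    set F := simplifiedNewtonSeq P u j
    obtain ⟨heA, he⟩ := newton_correction_mem hS hA hu ih.1 ih.2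
    have hF' : simplifiedNewtonSeq P u (j + 1) = F - u * P.eval F := rfl
    obtain ⟨r, hr, hPr⟩ := exists_eval_sub_eval_eq_mul _ _
      (fun _ hb _ ha => mul_mem_filtration_of_mem_supportedInSubring hS hb ha) hJ ih.1
      (sub_mem ih.1 heA)
    refine ⟨hF' ▸ sub_mem ih.1 heA, ?_⟩
    have hPF' : P.eval (simplifiedNewtonSeq P u (j + 1)) = -(u * P.eval F * r) := by
      rw [hF']
      linear_combination hPr - P.eval F * hu1
    have hlevel : ((j + 1 : ℕ) + 1 : ℚ) * δ = (j + 1) * δ + δ := by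
      push_cast
      ring
    rw [hPF', hlevel]
    exact neg_mem (mul_mem_filtration he hr)

include hA hJ hu hu1 in
theorem exists_eval_eq_zero_of_coeff_mem_filtration (hν : Monotone ν) (hδ : 0 < δ) :
    ∃ f ∈ supportedInSubring R S, f ∈ filtration R ν δ ∧ P.eval f = 0 := by
  set F := simplifiedNewtonSeq P u
  have hF := simplifiedNewtonSeq_mem hS hA hJ hu hu1
  set d : ℕ → HahnSeries Γ R := fun i => F (i + 1) - F i
  have hd_eq (i : ℕ) : d i = -(u * P.eval (F i)) := sub_sub_cancel_left _ _
  have hdA (i : ℕ) : d i ∈ supportedInSubring R S :=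
    hd_eq i ▸ neg_mem (newton_correction_mem hS hA hu (hF i).1 (hF i).2).1
  have hd (i : ℕ) : d i ∈ filtration R ν ((i + 1) * δ) :=
    hd_eq i ▸ neg_mem (newton_correction_mem hS hA hu (hF i).1 (hF i).2).2
  set f := (summableFamilyOfMemFiltration hν hδ hd).hsum
  have htail (j : ℕ) : f - F j ∈ filtration R ν ((j + 1) * δ) := by
    have hsum : ∑ i ∈ Finset.range j, d i = F j := by
      rw [Finset.sum_range_sub, show F 0 = 0 from rfl, sub_zero]
    exact hsum ▸ hsum_sub_sum_range_mem_filtration hν hδ hd j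
  have hfA : f ∈ supportedInSubring R S := hsum_mem_supportedIn hdA
  refine ⟨f, hfA, by simpa [show F 0 = 0 from rfl] using htail 0, ?_⟩
  refine eq_zero_of_forall_mem_filtration (ν := ν) hδ fun j => ?_
  refine filtration_anti (by linarith : (j : ℚ) * δ ≤ (j + 1) * δ) ?_
  obtain ⟨r, hr, h⟩ := exists_eval_sub_eval_eq_mul _ _
    (fun _ hb _ ha => mul_mem_filtration_of_mem_supportedInSubring hS hb ha) hJ (hF j).1 hfA
  rw [← sub_add_cancel (P.eval f) (P.eval (F j)), h]
  refine add_mem ?_ (hF j).2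
  simpa using mul_mem_filtration (htail j) (add_mem
    (mem_filtration_zero_of_mem_supportedInSubring hS (hA 1)) (filtration_anti hδ.le hr))

end Newton

theorem eq_of_eval_eq_zero_of_coeff_pos {Γ R : Type*} [AddCommMonoid Γ] [LinearOrder Γ]
    [IsOrderedCancelAddMonoid Γ] [CommRing R] [NoZeroDivisors R] {ν : Γ →+ ℚ}
    {P : (HahnSeries Γ R)[X]} (hP : ∀ t ≠ 1, ∀ v ∈ (P.coeff t).support, 0 < ν v)
    (hP1 : ∃ v ∈ (P.coeff 1).support, ν v = 0) {x y : HahnSeries Γ R}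
    (hx : x ∈ filtration R ν 0) (hy : y ∈ filtration R ν 0) (hPx : P.eval x = 0)
    (hPy : P.eval y = 0) : x = y := by
  refine Polynomial.eq_of_eval_eq_zero (supportedInSubring R ((AddSubmonoid.nonneg ℚ).comap ν))
    (supportedIn R {v | 0 < ν v}) (fun b hb a ha => ?_) hP ?_ hx hy hPx hPy
  · refine supportedIn_mono ?_ (mul_mem_supportedIn hb ha)
    rintro _ ⟨v, hv, w, hw, rfl⟩
    show 0 < ν (v + w)
    rw [map_add]
    exact add_pos_of_pos_of_nonneg hv hw
  · obtain ⟨v, hv, hv0⟩ := hP1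
    exact fun h => (h hv).ne' hv0

variable {Γ R : Type*} [AddCommGroup Γ] [LinearOrder Γ] [IsOrderedAddMonoid Γ]

theorem single_neg_mul_mem_supportedIn [CommRing R] {T : Set Γ} {o : Γ} {x : HahnSeries Γ R}
    (hx : ∀ v ∈ x.support, v - o ∈ T) (r : R) : single (-o) r * x ∈ supportedIn R T := by
  refine supportedIn_mono ?_ (mul_mem_supportedIn
    (single_mem_supportedIn (Set.mem_singleton (-o)) r) (subset_refl x.support))
  rintro _ ⟨_, rfl, v, hv, rfl⟩
  show -o + v ∈ T
  rw [neg_add_eq_sub]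
  exact hx v hv

theorem order_single_neg_order_mul [Field R] {x : HahnSeries Γ R} (hx : x ≠ 0) :
    (single (-x.order) x.leadingCoeff⁻¹ * x).order = 0 := by
  have hc : x.leadingCoeff⁻¹ ≠ 0 := inv_ne_zero (leadingCoeff_ne_zero.2 hx)
  rw [order_mul (single_ne_zero hc) hx, order_single hc, neg_add_cancel]

theorem exists_eval_eq_zero_of_sub_order_mem [Field R] {ν : Γ →+ ℚ} (hν : Monotone ν)
    {S : AddSubmonoid Γ} (hS : ∀ v ∈ S, 0 ≤ ν v) {δ : ℚ} (hδ : 0 < δ)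
    {P : (HahnSeries Γ R)[X]} (hP1 : P.coeff 1 ≠ 0) (hνo : ν (P.coeff 1).order = 0)
    (hPS : ∀ t, ∀ v ∈ (P.coeff t).support, v - (P.coeff 1).order ∈ S)
    (hPδ : ∀ t ≠ 1, ∀ v ∈ (P.coeff t).support, δ ≤ ν v) :
    ∃ f ∈ supportedInSubring R S, f ∈ filtration R ν δ ∧ P.eval f = 0 := by
  set o := (P.coeff 1).order
  set m := single (-o) (P.coeff 1).leadingCoeff⁻¹
  have hm : m ≠ 0 := single_ne_zero (inv_ne_zero (leadingCoeff_ne_zero.2 hP1))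
  set Q := Polynomial.C m * P with hQ
  have hQS (t : ℕ) : Q.coeff t ∈ supportedInSubring R S := by
    rw [hQ, coeff_C_mul]
    exact single_neg_mul_mem_supportedIn (hPS t) _
  have hQδ (t : ℕ) (ht : t ≠ 1) : Q.coeff t ∈ filtration R ν δ := by
    rw [hQ, coeff_C_mul]
    refine single_neg_mul_mem_supportedIn (fun v hv => ?_) _
    show δ ≤ ν (v - o)
    rw [map_sub, hνo, sub_zero]
    exact hPδ t ht v hv
  have hQ1 : (Q.coeff 1).order = 0 := by
    rw [hQ, coeff_C_mul]
    exact order_single_neg_order_mul hP1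
  have hQ1ne : Q.coeff 1 ≠ 0 := by
    rw [hQ, coeff_C_mul]
    exact mul_ne_zero hm hP1
  obtain ⟨f, hfS, hfδ, hQf⟩ := exists_eval_eq_zero_of_coeff_mem_filtration hS hQS hQδ
    (inv_mem_supportedInSubring (hQS 1) hQ1) (inv_mul_cancel₀ hQ1ne) hν hδ
  rw [hQ, eval_mul, eval_C] at hQf
  exact ⟨f, hfS, hfδ, (mul_eq_zero.1 hQf).resolve_left hm⟩

end HahnSeries

section IsBlowUpComp

variable {n : ℕ} {Φ Ψ : (Fin n → ℚ) → (Fin n → ℚ)}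

theorem isBlowUpComp_id : IsBlowUpComp n id := ⟨[], by simp, rfl⟩

theorem isBlowUpComp_blowUp {i j : Fin n} (hij : i < j) : IsBlowUpComp n (blowUp n i j) :=
  ⟨[blowUp n i j], by simpa using ⟨i, j, hij, rfl⟩, by simp⟩

theorem IsBlowUpComp.comp (hΦ : IsBlowUpComp n Φ) (hΨ : IsBlowUpComp n Ψ) :
    IsBlowUpComp n (Φ ∘ Ψ) := by
  obtain ⟨L₁, h₁, rfl⟩ := hΦ
  obtain ⟨L₂, h₂, rfl⟩ := hΨ
  refine ⟨L₁ ++ L₂, fun g hg => (List.mem_append.1 hg).elim (h₁ g) (h₂ g), ?_⟩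
  rw [List.foldr_append]
  exact (List.foldr_comp_eq_comp _ _).symm

theorem IsBlowUpComp.iterate (hΦ : IsBlowUpComp n Φ) (N : ℕ) : IsBlowUpComp n Φ^[N] := by
  induction N with
  | zero => exact isBlowUpComp_id
  | succ N ih => exact Function.iterate_succ Φ N ▸ ih.comp hΦ

end IsBlowUpComp

section BlowUpChain

variable {n : ℕ}

def blowUpHom (n : ℕ) (i j : Fin n) : AddMonoid.End (Fin n → ℚ) where
  toFun := blowUp n i j
  map_zero' := by
    ext l
    simp [blowUp]
  map_add' a b := by
    ext l
    simp only [blowUp, Pi.add_apply]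
    split_ifs <;> ring

theorem coe_blowUpHom (i j : Fin n) : ⇑(blowUpHom n i j) = blowUp n i j := rfl

theorem blowUp_iterate_apply {i j : Fin n} (hij : i ≠ j) (N : ℕ) (a : Fin n → ℚ) (l : Fin n) :
    (blowUp n i j)^[N] a l = if l = j then a j + N * a i else a l := by
  induction N generalizing l with
  | zero => split_ifs with hl <;> simp [hl]
  | succ N ih =>
    rw [Function.iterate_succ_apply', blowUp]
    simp only [ih, if_neg hij]
    split_ifs <;> push_cast <;> ring

/-- `blowUpChain n N j = φ_{j-1,j}^N ∘ ⋯ ∘ φ_{0,1}^N`; for `j = n` this is the map `Φ` with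
`Φ(a)_0 = a_0` and `Φ(a)_{l+1} = a_{l+1} + N Φ(a)_l`. -/
def blowUpChain (n N : ℕ) : ℕ → AddMonoid.End (Fin n → ℚ)
  | 0 => 1
  | j + 1 =>
    (if h : j + 1 < n then blowUpHom n ⟨j, by omega⟩ ⟨j + 1, h⟩ ^ N else 1) * blowUpChain n N j

variable {N : ℕ}

theorem isBlowUpComp_blowUpChain (j : ℕ) : IsBlowUpComp n (blowUpChain n N j) := by
  induction j with
  | zero => exact isBlowUpComp_id
  | succ j ih =>
    rw [blowUpChain, AddMonoid.End.coe_mul]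
    refine IsBlowUpComp.comp ?_ ih
    split_ifs with h
    · rw [AddMonoid.End.coe_pow, coe_blowUpHom]
      exact (isBlowUpComp_blowUp (Fin.mk_lt_mk.2 j.lt_succ_self)).iterate N
    · exact isBlowUpComp_id

theorem blowUpChain_succ_apply_of_ne {j : ℕ} (a : Fin n → ℚ) {l : Fin n} (hl : (l : ℕ) ≠ j + 1) :
    blowUpChain n N (j + 1) a l = blowUpChain n N j a l := by
  rw [blowUpChain, AddMonoid.End.coe_mul, Function.comp_apply]
  split_ifs with h
  · rw [AddMonoid.End.coe_pow, coe_blowUpHom, blowUp_iterate_apply (by simp [Fin.ext_iff]),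
      if_neg]
    exact fun h' => hl (by simp [h'])
  · rfl

theorem blowUpChain_succ_apply_of_eq {j : ℕ} (a : Fin n → ℚ) {l l' : Fin n}
    (hl : (l : ℕ) = j + 1) (hl' : (l' : ℕ) = j) :
    blowUpChain n N (j + 1) a l = blowUpChain n N j a l + N * blowUpChain n N j a l' := by
  have h : j + 1 < n := hl ▸ l.isLt
  obtain rfl : l = ⟨j + 1, h⟩ := Fin.ext hl
  obtain rfl : l' = ⟨j, Nat.lt_of_succ_lt h⟩ := Fin.ext hl'
  rw [blowUpChain, AddMonoid.End.coe_mul, Function.comp_apply, dif_pos h, AddMonoid.End.coe_pow,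
    coe_blowUpHom, blowUp_iterate_apply (by simp [Fin.ext_iff]), if_pos rfl]

theorem blowUpChain_apply_of_lt {j : ℕ} (a : Fin n → ℚ) {l : Fin n} (hl : j < l) :
    blowUpChain n N j a l = a l := by
  induction j with
  | zero => rfl
  | succ j ih => rw [blowUpChain_succ_apply_of_ne a (by omega), ih (by omega)]

theorem blowUpChain_apply_of_eq_zero (j : ℕ) (a : Fin n → ℚ) {l : Fin n} (hl : (l : ℕ) = 0) :
    blowUpChain n N j a l = a l := by
  induction j with
  | zero => rfl
  | succ j ih => rw [blowUpChain_succ_apply_of_ne a (by omega), ih]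

theorem blowUpChain_apply_mem (G : AddSubmonoid ℚ) (j : ℕ) {a : Fin n → ℚ} (ha : ∀ l, a l ∈ G)
    (l : Fin n) : blowUpChain n N j a l ∈ G := by
  induction j generalizing l with
  | zero => exact ha l
  | succ j ih =>
    by_cases hl : (l : ℕ) = j + 1
    · rw [blowUpChain_succ_apply_of_eq a hl (l' := ⟨j, by omega⟩) rfl, ← nsmul_eq_mul]
      exact add_mem (ih l) (nsmul_mem (ih _) N)
    · rw [blowUpChain_succ_apply_of_ne a hl]
      exact ih l

theorem blowUpChain_apply_nonneg {a : Fin n → ℚ} {q : Fin n} {δ B : ℚ} (hδ : 0 ≤ δ)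
    (hq : ∀ l < q, a l = 0) (haq : δ ≤ a q) (hB : ∀ l, -B ≤ a l) (hN : B + δ ≤ N * δ)
    (l : Fin n) : 0 ≤ blowUpChain n N n a l := by
  suffices key : ∀ j : ℕ, ∀ l : Fin n, (l : ℕ) ≤ j →
      ((l : ℕ) < q → blowUpChain n N j a l = 0) ∧ ((q : ℕ) ≤ l → δ ≤ blowUpChain n N j a l) by
    rcases lt_or_ge (l : ℕ) q with h | h
    · exact ((key n l l.isLt.le).1 h).ge
    · exact hδ.trans ((key n l l.isLt.le).2 h)
  intro j
  induction j with
  | zero =>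
    intro l hl
    refine ⟨hq l, fun h => ?_⟩
    obtain rfl : q = l := Fin.ext (by omega)
    exact haq
  | succ j ih =>
    intro l hl
    by_cases hlj : (l : ℕ) = j + 1
    · set l' : Fin n := ⟨j, by omega⟩
      have hl' := ih l' le_rfl
      rw [blowUpChain_succ_apply_of_eq a hlj (l' := l') rfl,
        blowUpChain_apply_of_lt a (by omega)]
      refine ⟨fun h => ?_, fun h => ?_⟩
      · rw [hq l h, hl'.1 (by simp [l']; omega)]
        ring
      · rcases h.lt_or_eq with h | h
        · have := hl'.2 (by simp [l']; omega)
          nlinarith [hB l]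
        · obtain rfl : q = l := Fin.ext h
          rw [hl'.1 (by simp [l']; omega)]
          simpa using haq
    · rw [blowUpChain_succ_apply_of_ne a hlj]
      exact ih l (by omega)

end BlowUpChain

theorem le_of_mem_zmultiples_of_pos {α : Type*} [Ring α] [LinearOrder α] [IsStrictOrderedRing α]
    {c x : α} (hc : 0 < c) (hx : x ∈ AddSubgroup.zmultiples c) (h : 0 < x) : c ≤ x := by
  obtain ⟨k, rfl⟩ := AddSubgroup.mem_zmultiples_iff.1 hx
  rw [zsmul_eq_mul] at h ⊢
  have hk : (1 : α) ≤ k := by exact_mod_cast (Int.cast_pos.1 (pos_of_mul_pos_left h hc.le))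
  exact le_mul_of_one_le_left hc.le hk

theorem mem_multiples_of_mem_zmultiples {α : Type*} [Ring α] [LinearOrder α]
    [IsStrictOrderedRing α] {c x : α} (hc : 0 < c) (hx : x ∈ AddSubgroup.zmultiples c)
    (h : 0 ≤ x) : x ∈ AddSubmonoid.multiples c := by
  obtain ⟨k, rfl⟩ := AddSubgroup.mem_zmultiples_iff.1 hx
  have hk : 0 ≤ k := by
    rw [zsmul_eq_mul] at h
    exact_mod_cast nonneg_of_mul_nonneg_left h hc
  refine ⟨k.toNat, ?_⟩
  change k.toNat • c = k • c
  rw [← natCast_zsmul, Int.toNat_of_nonneg hk]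

section Lattice

variable {n p N : ℕ}

def natLattice (n p : ℕ) : AddSubmonoid (Fin n → ℚ) :=
  AddSubmonoid.pi Set.univ fun _ => AddSubmonoid.multiples (p : ℚ)⁻¹

theorem mem_natLattice {a : Fin n → ℚ} : a ∈ natLattice n p ↔ ∀ l, ∃ b : ℕ, a l = b / p := by
  simp [natLattice, AddSubmonoid.mem_pi, AddSubmonoid.mem_multiples_iff, div_eq_mul_inv, eq_comm]

theorem apply_mem_multiples_of_mem_natLattice {a : Fin n → ℚ} (ha : a ∈ natLattice n p)
    (l : Fin n) : a l ∈ AddSubmonoid.multiples (p : ℚ)⁻¹ :=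
  (AddSubmonoid.mem_pi _).1 ha l trivial

theorem apply_mem_zmultiples_of_mem_natLattice {a : Fin n → ℚ} (ha : a ∈ natLattice n p)
    (l : Fin n) : a l ∈ AddSubgroup.zmultiples (p : ℚ)⁻¹ := by
  obtain ⟨b, hb⟩ := apply_mem_multiples_of_mem_natLattice ha l
  exact hb ▸ nsmul_mem (AddSubgroup.mem_zmultiples _) b

theorem apply_nonneg_of_mem_natLattice {a : Fin n → ℚ} (ha : a ∈ natLattice n p) (l : Fin n) :
    0 ≤ a l := by
  obtain ⟨b, hb⟩ := apply_mem_multiples_of_mem_natLattice ha l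
  rw [← hb]
  positivity

theorem blowUpChain_sub_mem_natLattice (hp : 0 < p) {o v : Fin n → ℚ} (ho : o ∈ natLattice n p)
    (hv : v ∈ natLattice n p) (hov : toLex o ≤ toLex v) {B : ℚ} (hoB : ∀ l, o l ≤ B)
    (hN : B + (p : ℚ)⁻¹ ≤ N * (p : ℚ)⁻¹) : blowUpChain n N n (v - o) ∈ natLattice n p := by
  have hp' : (0 : ℚ) < (p : ℚ)⁻¹ := by positivity
  have hzmul (l : Fin n) : (v - o) l ∈ AddSubgroup.zmultiples (p : ℚ)⁻¹ :=
    sub_mem (apply_mem_zmultiples_of_mem_natLattice hv l)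
      (apply_mem_zmultiples_of_mem_natLattice ho l)
  have hB (l : Fin n) : -B ≤ (v - o) l := by
    rw [Pi.sub_apply]
    linarith [hoB l, apply_nonneg_of_mem_natLattice hv l]
  rcases (sub_nonneg.2 hov).eq_or_lt with h | h
  · rw [show v - o = 0 from (congrArg ofLex h).symm, map_zero]
    exact zero_mem _
  obtain ⟨q, hq, hq_pos⟩ : ∃ q, (∀ l < q, 0 = (v - o) l) ∧ 0 < (v - o) q := h
  refine (AddSubmonoid.mem_pi _).2 fun l _ => mem_multiples_of_mem_zmultiples hp'
    (blowUpChain_apply_mem (AddSubgroup.zmultiples _).toAddSubmonoid n hzmul l) ?_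
  exact blowUpChain_apply_nonneg hp'.le (fun l hl => (hq l hl).symm)
    (le_of_mem_zmultiples_of_pos hp' (hzmul q) hq_pos) hB hN l

end Lattice

theorem monotone_ofLex_apply_of_forall_le {ι β : Type*} [LinearOrder ι] [WellFoundedLT ι]
    [PartialOrder β] {i₀ : ι} (h : ∀ i, i₀ ≤ i) : Monotone fun v : Lex (ι → β) => ofLex v i₀ := by
  intro v w hvw
  rcases hvw.eq_or_lt with rfl | hlt
  · exact le_rfl
  obtain ⟨i, hi, hvwi⟩ : ∃ i, (∀ j < i, ofLex v j = ofLex w j) ∧ ofLex v i < ofLex w i := hlt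
  rcases (h i).eq_or_lt with rfl | h₀
  · exact hvwi.le
  · exact (hi i₀ h₀).le

def firstCoord (n : ℕ) (h : 0 < n) : Lex (Fin n → ℚ) →+ ℚ :=
  (Pi.evalAddMonoidHom (fun _ => ℚ) ⟨0, h⟩).comp (ofLexAddEquiv _).toAddMonoidHom

theorem monotone_firstCoord {n : ℕ} (h : 0 < n) : Monotone (firstCoord n h) :=
  monotone_ofLex_apply_of_forall_le fun i => Nat.zero_le i

theorem exists_eval_eq_zero_and_blowUpChain_mem_natLattice {k : Type*} [Field k] {n p : ℕ}
    (h0 : 0 < n) (hp : 0 < p) {P : Polynomial (K k n)}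
    (hcoeff : ∀ t, ∀ v ∈ (P.coeff t).support, ofLex v ∈ natLattice n p)
    (hvanish : ∀ t ≠ 1, ∀ v ∈ (P.coeff t).support, 0 < firstCoord n h0 v)
    (hwm1 : ∃ v ∈ (P.coeff 1).support, firstCoord n h0 v = 0) :
    ∃ f : K k n, P.eval f = 0 ∧ (∀ v ∈ f.support, 0 < firstCoord n h0 v) ∧
      ∃ N : ℕ, ∀ v ∈ f.support, blowUpChain n N n (ofLex v) ∈ natLattice n p := by
  set ν := firstCoord n h0
  have hp' : (0 : ℚ) < (p : ℚ)⁻¹ := by positivity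
  obtain ⟨v₀, hv₀, hνv₀⟩ := hwm1
  have hc : P.coeff 1 ≠ 0 := HahnSeries.ne_zero_of_coeff_ne_zero hv₀
  set o := (P.coeff 1).order
  have ho : o ∈ (P.coeff 1).support := HahnSeries.coeff_order_eq_zero.not.2 hc
  have hνo : ν o = 0 := le_antisymm
    (hνv₀ ▸ monotone_firstCoord h0 (HahnSeries.order_le_of_coeff_ne_zero hv₀))
    (apply_nonneg_of_mem_natLattice (hcoeff 1 o ho) _)
  have hov (t : ℕ) (v) (hv : v ∈ (P.coeff t).support) : o ≤ v := by
    rcases eq_or_ne t 1 with rfl | ht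
    · exact HahnSeries.order_le_of_coeff_ne_zero hv
    · exact ((monotone_firstCoord h0).reflect_lt (hνo ▸ hvanish t ht v hv)).le
  set B : ℚ := ∑ l, ofLex o l
  have hoB (l : Fin n) : ofLex o l ≤ B := Finset.single_le_sum
    (fun i _ => apply_nonneg_of_mem_natLattice (hcoeff 1 o ho) i) (Finset.mem_univ l)
  obtain ⟨N, hN⟩ := exists_nat_ge ((B + (p : ℚ)⁻¹) * p)
  rw [← le_mul_inv_iff₀ (by positivity)] at hN
  set S := (natLattice n p).comap ((blowUpChain n N n).comp (ofLexAddEquiv _).toAddMonoidHom)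
  have hS (v) (hv : v ∈ S) : 0 ≤ ν v := by
    have : 0 ≤ blowUpChain n N n (ofLex v) ⟨0, h0⟩ := apply_nonneg_of_mem_natLattice hv _
    rwa [blowUpChain_apply_of_eq_zero n _ rfl] at this
  obtain ⟨f, hfS, hfν, hf⟩ := HahnSeries.exists_eval_eq_zero_of_sub_order_mem
    (monotone_firstCoord h0) hS hp' hc hνo
    (fun t v hv => blowUpChain_sub_mem_natLattice hp (hcoeff 1 o ho) (hcoeff t v hv)
      (hov t v hv) hoB hN)
    (fun t ht v hv => le_of_mem_zmultiples_of_pos hp'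
      (apply_mem_zmultiples_of_mem_natLattice (hcoeff t v hv) _) (hvanish t ht v hv))
  exact ⟨f, hf, fun v hv => hp'.trans_le (hfν hv), N, fun v hv => hfS hv⟩

theorem unique_root_with_positive_x1_order
    (k : Type*) [Field k]
    (n : ℕ) (hn : 1 < n) (p : ℕ) (hp : 0 < p)
    (P : Polynomial (K k n))
    (hcoeff : ∀ i : ℕ, ∀ v ∈ (P.coeff i).support, ∀ l : Fin n,
      ∃ a : ℕ, ofLex v l = (a : ℚ) / (p : ℚ))
    (hvanish : ∀ t : ℕ, t ≠ 1 → ∀ v ∈ (P.coeff t).support,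
      0 < ofLex v (⟨0, by omega⟩ : Fin n))
    (hwm1 : ∃ v ∈ (P.coeff 1).support, ofLex v (⟨0, by omega⟩ : Fin n) = 0) :
    ∃ f : K k n,
      (P.eval f = 0 ∧ ∀ v ∈ f.support, 0 < ofLex v (⟨0, by omega⟩ : Fin n)) ∧
      (∀ g : K k n, P.eval g = 0 →
        (∀ v ∈ g.support, 0 < ofLex v (⟨0, by omega⟩ : Fin n)) → g = f) ∧
      ∃ Φ : (Fin n → ℚ) → (Fin n → ℚ), IsBlowUpComp n Φ ∧
        ∀ v ∈ f.support, ∀ l : Fin n, ∃ a : ℕ, Φ (ofLex v) l = (a : ℚ) / (p : ℚ) := by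
  have h0 : 0 < n := by omega
  obtain ⟨f, hf, hfpos, N, hfN⟩ := exists_eval_eq_zero_and_blowUpChain_mem_natLattice h0 hp
    (fun t v hv => mem_natLattice.2 (hcoeff t v hv)) hvanish hwm1
  refine ⟨f, ⟨hf, hfpos⟩, fun g hg hgpos => ?_, blowUpChain n N n, isBlowUpComp_blowUpChain n,
    fun v hv => mem_natLattice.1 (hfN v hv)⟩
  exact HahnSeries.eq_of_eval_eq_zero_of_coeff_pos (ν := firstCoord n h0) hvanish hwm1
    (fun v hv => (hgpos v hv).le) (fun v hv => (hfpos v hv).le) hg hf
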